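/- Let π* ∈ Π(μ,ν) minimize the sum of the top k eigenvalues of V_π, let f_t(x,y) = (1−t)x + ty, and μ_t = (f_t)_#π*. Then for all s, t ∈ [0,1], S_k(μ_s, μ_t) = |t − s| · S_k(μ,ν); in particular t ↦ μ_t is a constant-speed geodesic in (P₂(ℝ^d), S_k). -/

import Mathlib

noncomputable section
open MeasureTheory Matrix

abbrev Ed (d : ℕ) := EuclideanSpace ℝ (Fin d)

def couplings {d : ℕ} (μ ν : Measure (Ed d)) : Set (Measure (Ed d × Ed d)) :=
  {π | IsProbabilityMeasure π ∧ π.map Prod.fst = μ ∧ π.map Prod.snd = ν}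

def transportCost {d : ℕ} (π : Measure (Ed d × Ed d)) : ℝ :=
  ∫ p, ‖p.1 - p.2‖ ^ 2 ∂π

/-- Squared 2-Wasserstein distance. -/
def W2sq {d : ℕ} (μ ν : Measure (Ed d)) : ℝ :=
  sInf (transportCost '' couplings μ ν)

/-- Second-order displacement matrix `V_π = ∫ (x−y)(x−y)ᵀ dπ`, entrywise. -/
def Vpi {d : ℕ} (π : Measure (Ed d × Ed d)) : Matrix (Fin d) (Fin d) ℝ :=
  Matrix.of fun i j => ∫ p, (p.1 i - p.2 i) * (p.1 j - p.2 j) ∂π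

lemma Vpi_isHermitian {d : ℕ} (π : Measure (Ed d × Ed d)) : (Vpi π).IsHermitian := by
  unfold Matrix.IsHermitian
  ext i j
  simp [Vpi, Matrix.conjTranspose_apply, mul_comm]

/-- Eigenvalues in decreasing order: `eigDesc V h i` is the `(i+1)`-th largest eigenvalue. -/
def eigDesc {d : ℕ} (V : Matrix (Fin d) (Fin d) ℝ) (h : V.IsHermitian) : Fin d → ℝ :=
  fun i => h.eigenvalues (Tuple.sort h.eigenvalues i.rev)

/-- Sum of the `k` largest eigenvalues. -/
def topEigSum {d : ℕ} (k : ℕ) (V : Matrix (Fin d) (Fin d) ℝ) (h : V.IsHermitian) : ℝ :=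
  ∑ i ∈ Finset.univ.filter (fun i : Fin d => (i : ℕ) < k), eigDesc V h i

/-- Squared subspace robust Wasserstein distance:
`S_k²(μ,ν) = inf_{π ∈ Π(μ,ν)} Σ_{l=1}^k λ_l(V_π)`. -/
def SRWsq {d : ℕ} (k : ℕ) (μ ν : Measure (Ed d)) : ℝ :=
  sInf ((fun π => topEigSum k (Vpi π) (Vpi_isHermitian π)) '' couplings μ ν)

/-!
By Ky Fan's principle, for `V ⪰ 0` the sum of the `k` largest eigenvalues is
`max {tr (Z V) : 0 ⪯ Z ⪯ 1, tr Z ≤ k}`; writing `Z = Bᵀ B`, each `√(tr (Z E[X Xᵀ]))` is the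
`L²` norm of `B X`. Hence `X ↦ √(Σ_{l ≤ k} λ_l(E[X Xᵀ]))` is a seminorm on square-integrable
random vectors, and `S_k` is the infimum of this seminorm of the displacement `x - y` over
couplings.

The plan `(f_s, f_t)_#π*` has displacement `(t - s)(x - y)`, so
`S_k(μ_s, μ_t) ≤ |t - s| S_k(μ, ν)`. Conversely, for `s ≤ t` glue an arbitrary coupling of
`μ_s` and `μ_t` with two copies of `π*`, disintegrated along `f_s` and `f_t`. This produces a
coupling of `μ` and `ν` whose displacement is `s (x - y) + (x_s - x_t) + (1 - t)(x' - y')`,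
and the triangle inequality together with the optimality of `π*` yields
`(t - s) S_k(μ, ν) ≤ S_k(μ_s, μ_t)`.
-/

open ProbabilityTheory

section KyFan

variable {d : ℕ}

lemma eigDesc_antitone (V : Matrix (Fin d) (Fin d) ℝ) (hV : V.IsHermitian) :
    Antitone (eigDesc V hV) := fun _ _ hij =>
  Tuple.monotone_sort hV.eigenvalues (Fin.rev_le_rev.2 hij)

lemma eigDesc_nonneg {V : Matrix (Fin d) (Fin d) ℝ} (hV : V.PosSemidef) (j : Fin d) :
    0 ≤ eigDesc V hV.1 j :=
  hV.eigenvalues_nonneg _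

lemma topEigSum_nonneg (k : ℕ) {V : Matrix (Fin d) (Fin d) ℝ} (hV : V.PosSemidef) :
    0 ≤ topEigSum k V hV.1 :=
  Finset.sum_nonneg fun j _ => eigDesc_nonneg hV j

lemma sum_mul_le_sum_filter_lt_of_antitone {k : ℕ} {g w : Fin d → ℝ} (hg : Antitone g)
    (hg0 : ∀ j, 0 ≤ g j) (hw0 : ∀ j, 0 ≤ w j) (hw1 : ∀ j, w j ≤ 1) (hwk : ∑ j, w j ≤ k) :
    ∑ j, w j * g j ≤ ∑ j ∈ Finset.univ.filter (fun j : Fin d => (j : ℕ) < k), g j := by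
  -- `θ` is a threshold below the first `k` terms and above the others.
  set θ : ℝ := if h : k < d then g ⟨k, h⟩ else 0 with hθ
  have hθ0 : 0 ≤ θ := by
    rw [hθ]
    split_ifs
    exacts [hg0 _, le_rfl]
  have hθ_card : θ * (Finset.univ.filter (fun j : Fin d => (j : ℕ) < k)).card = θ * k := by
    rw [Fin.card_filter_val_lt, hθ]
    split_ifs with h
    · rw [min_eq_right h.le]
    · simp
  have hterm : ∀ j, w j * (g j - θ) ≤ if (j : ℕ) < k then g j - θ else 0 := by
    intro j
    split_ifs with hj
    · have : θ ≤ g j := by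
        rw [hθ]
        split_ifs with h
        exacts [hg (Fin.mk_le_mk.2 hj.le), hg0 j]
      nlinarith [hw1 j]
    · have h : k < d := by omega
      have : g j ≤ θ := by
        rw [hθ, dif_pos h]
        exact hg (Fin.mk_le_mk.2 (not_lt.1 hj))
      nlinarith [hw0 j]
  calc ∑ j, w j * g j = ∑ j, w j * (g j - θ) + θ * ∑ j, w j := by
        rw [Finset.mul_sum, ← Finset.sum_add_distrib]
        exact Finset.sum_congr rfl fun j _ => by ring
    _ ≤ ∑ j : Fin d, (if (j : ℕ) < k then g j - θ else 0) + θ * k :=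
        add_le_add (Finset.sum_le_sum fun j _ => hterm j) (mul_le_mul_of_nonneg_left hwk hθ0)
    _ = ∑ j ∈ Finset.univ.filter (fun j : Fin d => (j : ℕ) < k), g j := by
        rw [← Finset.sum_filter, Finset.sum_sub_distrib, Finset.sum_const, nsmul_eq_mul,
          mul_comm, hθ_card]
        ring

lemma trace_mul_eq_sum_eigDesc (Z V : Matrix (Fin d) (Fin d) ℝ) (hV : V.IsHermitian) :
    (Z * V).trace = ∑ j,
      (star (hV.eigenvectorUnitary : Matrix (Fin d) (Fin d) ℝ) * Z *
        (hV.eigenvectorUnitary : Matrix (Fin d) (Fin d) ℝ))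
          (Tuple.sort hV.eigenvalues j.rev) (Tuple.sort hV.eigenvalues j.rev) *
        eigDesc V hV j := by
  set U : Matrix (Fin d) (Fin d) ℝ := (hV.eigenvectorUnitary : Matrix (Fin d) (Fin d) ℝ)
  have hV' : V = U * diagonal hV.eigenvalues * star U := by
    conv_lhs => rw [hV.spectral_theorem]
    rfl
  calc (Z * V).trace = ∑ i, (star U * Z * U) i i * hV.eigenvalues i := by
        conv_lhs => rw [hV', ← Matrix.mul_assoc, ← Matrix.mul_assoc, trace_mul_cycle,
          ← Matrix.mul_assoc]
        simp [trace, mul_diagonal]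
    _ = _ := (Equiv.sum_comp (Fin.revPerm.trans (Tuple.sort hV.eigenvalues))
        (fun i => (star U * Z * U) i i * hV.eigenvalues i)).symm

lemma trace_mul_le_topEigSum (k : ℕ) {Z V : Matrix (Fin d) (Fin d) ℝ} (hV : V.PosSemidef)
    (hZ : Z.PosSemidef) (hZ1 : (1 - Z).PosSemidef) (hZk : Z.trace ≤ k) :
    (Z * V).trace ≤ topEigSum k V hV.1 := by
  set U : Matrix (Fin d) (Fin d) ℝ := (hV.1.eigenvectorUnitary : Matrix (Fin d) (Fin d) ℝ)
  set W := star U * Z * U with hW_def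
  have hUU : star U * U = 1 := Unitary.coe_star_mul_self _
  have hW : W.PosSemidef := hZ.conjTranspose_mul_mul_same U
  have hW1 : (1 - W).PosSemidef := by
    have := hZ1.conjTranspose_mul_mul_same U
    rwa [Matrix.mul_sub, Matrix.sub_mul, Matrix.mul_one, ← star_eq_conjTranspose, hUU] at this
  have hWtr : W.trace = Z.trace := by
    rw [hW_def, trace_mul_cycle, show U * star U = 1 from Unitary.coe_mul_star_self _,
      Matrix.one_mul]
  rw [trace_mul_eq_sum_eigDesc Z V hV.1]
  refine sum_mul_le_sum_filter_lt_of_antitone (eigDesc_antitone V hV.1) (eigDesc_nonneg hV)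
    (fun j => hW.diag_nonneg) (fun j => ?_) ?_
  · have := hW1.diag_nonneg (i := Tuple.sort hV.1.eigenvalues j.rev)
    simp only [Matrix.sub_apply, one_apply_eq] at this
    linarith
  · calc _ = W.trace := Equiv.sum_comp (Fin.revPerm.trans (Tuple.sort hV.1.eigenvalues))
          (fun i => W i i)
      _ ≤ k := hWtr ▸ hZk

lemma exists_trace_mul_eq_topEigSum (k : ℕ) {V : Matrix (Fin d) (Fin d) ℝ}
    (hV : V.IsHermitian) :
    ∃ Z : Matrix (Fin d) (Fin d) ℝ, Z.PosSemidef ∧ (1 - Z).PosSemidef ∧ Z.trace ≤ k ∧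
      (Z * V).trace = topEigSum k V hV := by
  set U : Matrix (Fin d) (Fin d) ℝ := (hV.eigenvectorUnitary : Matrix (Fin d) (Fin d) ℝ)
  set σ : Equiv.Perm (Fin d) := Fin.revPerm.trans (Tuple.sort hV.eigenvalues)
  set w : Fin d → ℝ := fun i => if ((σ.symm i : Fin d) : ℕ) < k then 1 else 0
  have hw : ∀ j, w (σ j) = if (j : ℕ) < k then 1 else 0 := by simp [w]
  have hUU : star U * U = 1 := Unitary.coe_star_mul_self _
  have hUU' : U * star U = 1 := Unitary.coe_mul_star_self _
  have hconj (D : Matrix (Fin d) (Fin d) ℝ) : star U * (U * D * star U) * U = D := by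
    simp only [← Matrix.mul_assoc, hUU, Matrix.one_mul]
    rw [Matrix.mul_assoc, hUU, Matrix.mul_one]
  have hpsd {D : Fin d → ℝ} (hD : ∀ i, 0 ≤ D i) : (U * diagonal D * star U).PosSemidef :=
    (posSemidef_diagonal_iff.2 hD).mul_mul_conjTranspose_same U
  refine ⟨U * diagonal w * star U, hpsd fun i => by simp only [w]; split_ifs <;> norm_num,
    ?_, ?_, ?_⟩
  · have : 1 - U * diagonal w * star U = U * diagonal (1 - w) * star U := by
      have hD : diagonal (1 - w) = 1 - diagonal w := by
        ext i j
        by_cases h : i = j <;> simp [h, one_apply]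
      rw [hD, Matrix.mul_sub, Matrix.sub_mul, Matrix.mul_one, hUU']
    rw [this]
    exact hpsd fun i => by simp only [w, Pi.sub_apply, Pi.one_apply]; split_ifs <;> norm_num
  · rw [trace_mul_cycle, hUU, Matrix.one_mul, trace_diagonal, ← Equiv.sum_comp σ w]
    simp_rw [hw]
    rw [Finset.sum_boole, Fin.card_filter_val_lt]
    exact_mod_cast min_le_right d k
  · rw [trace_mul_eq_sum_eigDesc _ V hV, hconj, topEigSum, Finset.sum_filter]
    refine Finset.sum_congr rfl fun j _ => ?_
    rw [diagonal_apply_eq, show Tuple.sort hV.eigenvalues j.rev = σ j from rfl, hw j]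
    split_ifs <;> simp

lemma topEigSum_smul (k : ℕ) {V : Matrix (Fin d) (Fin d) ℝ} (hV : V.PosSemidef) {c : ℝ}
    (hc : 0 ≤ c) : topEigSum k (c • V) (hV.smul hc).1 = c * topEigSum k V hV.1 := by
  apply le_antisymm
  · obtain ⟨Z, hZ, hZ1, hZk, hZV⟩ := exists_trace_mul_eq_topEigSum k (hV.smul hc).1
    rw [← hZV, Matrix.mul_smul, trace_smul, smul_eq_mul]
    exact mul_le_mul_of_nonneg_left (trace_mul_le_topEigSum k hV hZ hZ1 hZk) hc
  · obtain ⟨Z, hZ, hZ1, hZk, hZV⟩ := exists_trace_mul_eq_topEigSum k hV.1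
    rw [← hZV, ← smul_eq_mul, ← trace_smul, ← Matrix.mul_smul]
    exact trace_mul_le_topEigSum k (hV.smul hc) hZ hZ1 hZk

end KyFan

section SecondMoment

variable {Ω : Type*} [MeasurableSpace Ω] {M : Measure Ω} {d : ℕ}

lemma sqrt_integral_norm_sq_eq {E : Type*} [NormedAddCommGroup E] {f : Ω → E}
    (hf : MemLp f 2 M) : √(∫ ω, ‖f ω‖ ^ 2 ∂M) = (eLpNorm f 2 M).toReal := by
  rw [hf.eLpNorm_eq_integral_rpow_norm two_ne_zero ENNReal.ofNat_ne_top,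
    ENNReal.toReal_ofReal (by positivity), Real.sqrt_eq_rpow]
  norm_num

lemma sqrt_integral_norm_add_sq_le {E : Type*} [NormedAddCommGroup E] {f g : Ω → E}
    (hf : MemLp f 2 M) (hg : MemLp g 2 M) :
    √(∫ ω, ‖(f + g) ω‖ ^ 2 ∂M) ≤ √(∫ ω, ‖f ω‖ ^ 2 ∂M) + √(∫ ω, ‖g ω‖ ^ 2 ∂M) := by
  rw [sqrt_integral_norm_sq_eq hf, sqrt_integral_norm_sq_eq hg,
    sqrt_integral_norm_sq_eq (hf.add hg),
    ← ENNReal.toReal_add hf.eLpNorm_ne_top hg.eLpNorm_ne_top]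
  exact ENNReal.toReal_mono (ENNReal.add_ne_top.2 ⟨hf.eLpNorm_ne_top, hg.eLpNorm_ne_top⟩)
    (eLpNorm_add_le hf.1 hg.1 one_le_two)

def secondMoment (M : Measure Ω) (X : Ω → Ed d) : Matrix (Fin d) (Fin d) ℝ :=
  Matrix.of fun i j => ∫ ω, X ω i * X ω j ∂M

lemma secondMoment_isHermitian (M : Measure Ω) (X : Ω → Ed d) :
    (secondMoment M X).IsHermitian := by
  ext i j
  simp [secondMoment, mul_comm]

lemma Vpi_eq_secondMoment (π : Measure (Ed d × Ed d)) :
    Vpi π = secondMoment π (fun p => p.1 - p.2) := rfl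

lemma secondMoment_congr_ae {X Y : Ω → Ed d} (h : X =ᵐ[M] Y) :
    secondMoment M X = secondMoment M Y := by
  ext i j
  exact integral_congr_ae (h.mono fun ω hω => by simp only [hω])

lemma secondMoment_smul (c : ℝ) (X : Ω → Ed d) :
    secondMoment M (c • X) = c ^ 2 • secondMoment M X := by
  ext i j
  simp only [secondMoment, of_apply, Matrix.smul_apply, Pi.smul_apply, PiLp.smul_apply,
    smul_eq_mul, ← integral_const_mul]
  exact integral_congr_ae (ae_of_all _ fun ω => by ring)

lemma secondMoment_map {Ω' : Type*} [MeasurableSpace Ω'] {f : Ω → Ω'} (hf : AEMeasurable f M)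
    {X : Ω' → Ed d} (hX : Measurable X) :
    secondMoment (M.map f) X = secondMoment M (X ∘ f) := by
  ext i j
  exact integral_map hf (by fun_prop)

lemma integral_sum_mul_sum {X : Ω → Ed d} (hX : MemLp X 2 M) (a b : Fin d → ℝ) :
    ∫ ω, (∑ i, a i * X ω i) * (∑ j, b j * X ω j) ∂M =
      ∑ i, ∑ j, a i * b j * secondMoment M X i j := by
  have hint (i j : Fin d) : Integrable (fun ω => a i * b j * (X ω i * X ω j)) M :=
    ((hX.eval_piLp i).integrable_mul (hX.eval_piLp j)).const_mul _
  calc ∫ ω, (∑ i, a i * X ω i) * (∑ j, b j * X ω j) ∂M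
      = ∫ ω, ∑ i, ∑ j, a i * b j * (X ω i * X ω j) ∂M := by
        refine integral_congr_ae (ae_of_all _ fun ω => ?_)
        simp only [Finset.sum_mul_sum]
        exact Finset.sum_congr rfl fun i _ => Finset.sum_congr rfl fun j _ => by ring
    _ = ∑ i, ∑ j, a i * b j * secondMoment M X i j := by
        rw [integral_finsetSum _ fun i _ => integrable_finsetSum _ fun j _ => hint i j]
        refine Finset.sum_congr rfl fun i _ => ?_
        rw [integral_finsetSum _ fun j _ => hint i j]
        exact Finset.sum_congr rfl fun j _ => integral_const_mul _ _

lemma posSemidef_secondMoment {X : Ω → Ed d} (hX : MemLp X 2 M) :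
    (secondMoment M X).PosSemidef := by
  refine .of_dotProduct_mulVec_nonneg (secondMoment_isHermitian M X) fun x => ?_
  calc 0 ≤ ∫ ω, (∑ i, x i * X ω i) * (∑ j, x j * X ω j) ∂M :=
        integral_nonneg fun ω => mul_self_nonneg _
    _ = star x ⬝ᵥ (secondMoment M X *ᵥ x) := by
        rw [integral_sum_mul_sum hX]
        simp only [dotProduct, mulVec, Finset.mul_sum, star_trivial]
        exact Finset.sum_congr rfl fun i _ => Finset.sum_congr rfl fun j _ => by ring

lemma secondMoment_toEuclideanLin (A : Matrix (Fin d) (Fin d) ℝ) {X : Ω → Ed d}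
    (hX : MemLp X 2 M) :
    secondMoment M (fun ω => toEuclideanLin A (X ω)) = A * secondMoment M X * Aᵀ := by
  ext i j
  simp only [secondMoment, of_apply, ofLp_toLpLin, toLin'_apply, mulVec, dotProduct]
  rw [integral_sum_mul_sum hX]
  simp only [Matrix.mul_apply, transpose_apply, Finset.sum_mul]
  rw [Finset.sum_comm]
  exact Finset.sum_congr rfl fun l _ => Finset.sum_congr rfl fun m _ => by
    rw [secondMoment, of_apply]
    ring

lemma trace_secondMoment {X : Ω → Ed d} (hX : MemLp X 2 M) :
    (secondMoment M X).trace = ∫ ω, ‖X ω‖ ^ 2 ∂M := by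
  simp_rw [EuclideanSpace.norm_sq_eq, trace, Matrix.diag, secondMoment, of_apply]
  rw [integral_finsetSum _ fun i _ => (hX.eval_piLp i).integrable_norm_pow two_ne_zero]
  simp [sq]

end SecondMoment

section KyFanNorm

variable {Ω : Type*} [MeasurableSpace Ω] {M : Measure Ω} {d : ℕ}

open scoped ComplexOrder MatrixOrder in
lemma Matrix.PosSemidef.exists_eq_star_mul_self {n 𝕜 : Type*} [Fintype n] [DecidableEq n]
    [RCLike 𝕜] {Z : Matrix n n 𝕜} (hZ : Z.PosSemidef) : ∃ B, Z = star B * B :=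
  CStarAlgebra.nonneg_iff_eq_star_mul_self.mp hZ.nonneg

lemma trace_star_mul_self_mul_secondMoment (B : Matrix (Fin d) (Fin d) ℝ) {X : Ω → Ed d}
    (hX : MemLp X 2 M) :
    (star B * B * secondMoment M X).trace = ∫ ω, ‖toEuclideanLin B (X ω)‖ ^ 2 ∂M := by
  rw [trace_mul_cycle, trace_mul_cycle, star_eq_conjTranspose,
    conjTranspose_eq_transpose_of_trivial, ← secondMoment_toEuclideanLin B hX, trace_secondMoment]
  exact (toEuclideanLin B).toContinuousLinearMap.comp_memLp' hX

def kyFanNorm (k : ℕ) (M : Measure Ω) (X : Ω → Ed d) : ℝ :=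
  √(topEigSum k (secondMoment M X) (secondMoment_isHermitian M X))

lemma kyFanNorm_add_le (k : ℕ) {X Y : Ω → Ed d} (hX : MemLp X 2 M) (hY : MemLp Y 2 M) :
    kyFanNorm k M (X + Y) ≤ kyFanNorm k M X + kyFanNorm k M Y := by
  obtain ⟨Z, hZ, hZ1, hZk, hZXY⟩ :=
    exists_trace_mul_eq_topEigSum k (secondMoment_isHermitian M (X + Y))
  obtain ⟨B, rfl⟩ := hZ.exists_eq_star_mul_self
  have hBX := (toEuclideanLin B).toContinuousLinearMap.comp_memLp' hX
  have hBY := (toEuclideanLin B).toContinuousLinearMap.comp_memLp' hY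
  have hupper {V : Ω → Ed d} (hV : MemLp V 2 M) :
      √(∫ ω, ‖toEuclideanLin B (V ω)‖ ^ 2 ∂M) ≤ kyFanNorm k M V := by
    rw [← trace_star_mul_self_mul_secondMoment B hV]
    exact Real.sqrt_le_sqrt
      (trace_mul_le_topEigSum k (posSemidef_secondMoment hV) hZ hZ1 hZk)
  calc kyFanNorm k M (X + Y)
      = √(∫ ω, ‖(toEuclideanLin B ∘ X + toEuclideanLin B ∘ Y) ω‖ ^ 2 ∂M) := by
        rw [kyFanNorm, ← hZXY, trace_star_mul_self_mul_secondMoment B (hX.add hY)]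
        simp only [Pi.add_apply, Function.comp_apply, map_add]
    _ ≤ _ := sqrt_integral_norm_add_sq_le hBX hBY
    _ ≤ kyFanNorm k M X + kyFanNorm k M Y := add_le_add (hupper hX) (hupper hY)

lemma kyFanNorm_smul (k : ℕ) {X : Ω → Ed d} (hX : MemLp X 2 M) (c : ℝ) :
    kyFanNorm k M (c • X) = |c| * kyFanNorm k M X := by
  rw [kyFanNorm, kyFanNorm]
  simp_rw [secondMoment_smul]
  rw [topEigSum_smul k (posSemidef_secondMoment hX) (sq_nonneg c), Real.sqrt_mul (sq_nonneg c),
    Real.sqrt_sq_eq_abs]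

lemma kyFanNorm_congr_ae (k : ℕ) {X Y : Ω → Ed d} (h : X =ᵐ[M] Y) :
    kyFanNorm k M X = kyFanNorm k M Y := by
  simp only [kyFanNorm, secondMoment_congr_ae h]

lemma kyFanNorm_map (k : ℕ) {Ω' : Type*} [MeasurableSpace Ω'] {f : Ω → Ω'}
    (hf : AEMeasurable f M) {X : Ω' → Ed d} (hX : Measurable X) :
    kyFanNorm k (M.map f) X = kyFanNorm k M (X ∘ f) := by
  simp only [kyFanNorm, secondMoment_map hf hX]

lemma sq_kyFanNorm_sub (k : ℕ) {π : Measure (Ed d × Ed d)}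
    (hπ : MemLp (fun p : Ed d × Ed d => p.1 - p.2) 2 π) :
    kyFanNorm k π (fun p => p.1 - p.2) ^ 2 = topEigSum k (Vpi π) (Vpi_isHermitian π) :=
  Real.sq_sqrt (topEigSum_nonneg k (posSemidef_secondMoment hπ))

end KyFanNorm

section Gluing

variable {α β A B : Type*} [MeasurableSpace α] [MeasurableSpace β] [MeasurableSpace A]
  [MeasurableSpace B]

lemma MeasureTheory.Measure.map_prodMap_compProd_comap (μ : Measure α) [SFinite μ] {f : α → β}
    (hf : Measurable f) (κ : Kernel β A) [IsSFiniteKernel κ] :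
    (μ ⊗ₘ κ.comap f hf).map (Prod.map f id) = μ.map f ⊗ₘ κ := by
  ext s hs
  rw [Measure.map_apply (by fun_prop) hs, Measure.compProd_apply (by measurability),
    Measure.compProd_apply hs, lintegral_map (Kernel.measurable_kernel_prodMk_left hs) hf]
  rfl

lemma exists_glue [StandardBorelSpace A] [Nonempty A] [StandardBorelSpace B] [Nonempty B]
    (γ : Measure (α × β)) [IsProbabilityMeasure γ]
    (ρ₁ : Measure (α × A)) [IsFiniteMeasure ρ₁] (ρ₂ : Measure (β × B)) [IsFiniteMeasure ρ₂]
    (h₁ : ρ₁.fst = γ.fst) (h₂ : ρ₂.fst = γ.snd) :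
    ∃ M : Measure ((α × β) × (A × B)), IsProbabilityMeasure M ∧ M.map Prod.fst = γ ∧
      M.map (fun ω => (ω.1.1, ω.2.1)) = ρ₁ ∧ M.map (fun ω => (ω.1.2, ω.2.2)) = ρ₂ := by
  set κ := (ρ₁.condKernel.comap Prod.fst measurable_fst) ×ₖ
    (ρ₂.condKernel.comap Prod.snd measurable_snd)
  refine ⟨γ ⊗ₘ κ, inferInstance, Measure.fst_compProd γ κ, ?_, ?_⟩
  · calc (γ ⊗ₘ κ).map (fun ω => (ω.1.1, ω.2.1))
        = ((γ ⊗ₘ κ).map (Prod.map id Prod.fst)).map (Prod.map Prod.fst id) := by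
          rw [Measure.map_map (by fun_prop) (by fun_prop)]; rfl
      _ = ρ₁ := by
          rw [← Measure.compProd_map measurable_fst, ← Kernel.fst_eq, Kernel.fst_prod,
            Measure.map_prodMap_compProd_comap, ← Measure.fst, ← h₁, ρ₁.disintegrate]
  · calc (γ ⊗ₘ κ).map (fun ω => (ω.1.2, ω.2.2))
        = ((γ ⊗ₘ κ).map (Prod.map id Prod.snd)).map (Prod.map Prod.snd id) := by
          rw [Measure.map_map (by fun_prop) (by fun_prop)]; rfl
      _ = ρ₂ := by
          rw [← Measure.compProd_map measurable_snd, ← Kernel.snd_eq, Kernel.snd_prod,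
            Measure.map_prodMap_compProd_comap, ← Measure.snd, ← h₂, ρ₂.disintegrate]

lemma ae_eq_comp_of_map_eq_map_prodMk [MeasurableEq A] {Ω : Type*} [MeasurableSpace Ω]
    {M : Measure Ω} {π : Measure α} {f : α → A} (hf : Measurable f) {g : Ω → A} {h : Ω → α}
    (hgh : Measurable fun ω => (g ω, h ω))
    (heq : M.map (fun ω => (g ω, h ω)) = π.map (fun x => (f x, x))) :
    ∀ᵐ ω ∂M, g ω = f (h ω) := by
  have hS : MeasurableSet {q : A × α | q.1 = f q.2} :=
    measurableSet_eq_fun measurable_fst (hf.comp measurable_snd)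
  have hπ : ∀ᵐ q ∂π.map (fun x => (f x, x)), q.1 = f q.2 :=
    (ae_map_iff (by fun_prop) hS).2 (ae_of_all _ fun _ => rfl)
  rw [← heq] at hπ
  exact (ae_map_iff hgh.aemeasurable hS).1 hπ

lemma exists_lift_of_map_eq [StandardBorelSpace A] [Nonempty A] [MeasurableEq α]
    {π : Measure A} [IsFiniteMeasure π] {f g : A → α} (hf : Measurable f) (hg : Measurable g)
    (γ : Measure (α × α)) [IsProbabilityMeasure γ] (h₁ : γ.map Prod.fst = π.map f)
    (h₂ : γ.map Prod.snd = π.map g) :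
    ∃ M : Measure ((α × α) × (A × A)), IsProbabilityMeasure M ∧ M.map Prod.fst = γ ∧
      M.map (fun ω => ω.2.1) = π ∧ M.map (fun ω => ω.2.2) = π ∧
      (∀ᵐ ω ∂M, ω.1.1 = f ω.2.1) ∧ ∀ᵐ ω ∂M, ω.1.2 = g ω.2.2 := by
  obtain ⟨M, hM, hMγ, hM₁, hM₂⟩ := exists_glue γ (π.map fun p => (f p, p))
    (π.map fun p => (g p, p)) (by rw [Measure.fst_map_prodMk measurable_id', Measure.fst, h₁])
    (by rw [Measure.fst_map_prodMk measurable_id', Measure.snd, h₂])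
  refine ⟨M, hM, hMγ, ?_, ?_, ae_eq_comp_of_map_eq_map_prodMk hf (by fun_prop) hM₁,
    ae_eq_comp_of_map_eq_map_prodMk hg (by fun_prop) hM₂⟩
  · have h := congrArg Measure.snd hM₁
    rwa [Measure.snd_map_prodMk (by fun_prop), Measure.snd_map_prodMk hf, Measure.map_id'] at h
  · have h := congrArg Measure.snd hM₂
    rwa [Measure.snd_map_prodMk (by fun_prop), Measure.snd_map_prodMk hg, Measure.map_id'] at h

end Gluing

section Interpolation

variable {d : ℕ}

def interp (t : ℝ) (p : Ed d × Ed d) : Ed d := (1 - t) • p.1 + t • p.2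

@[fun_prop]
lemma measurable_interp (t : ℝ) : Measurable (interp (d := d) t) := by
  unfold interp; fun_prop

lemma interp_sub_interp (s t : ℝ) (p : Ed d × Ed d) :
    interp s p - interp t p = (t - s) • (p.1 - p.2) := by
  simp only [interp, smul_sub, sub_smul, one_smul]
  abel

lemma fst_sub_interp (t : ℝ) (p : Ed d × Ed d) : p.1 - interp t p = t • (p.1 - p.2) := by
  simp only [interp, smul_sub, sub_smul, one_smul]
  abel

lemma interp_sub_snd (t : ℝ) (p : Ed d × Ed d) :
    interp t p - p.2 = (1 - t) • (p.1 - p.2) := by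
  simp only [interp, smul_sub, sub_smul, one_smul]
  abel

lemma memLp_of_map_eq {X : Type*} [MeasurableSpace X] {π : Measure X} {f : X → Ed d}
    (hf : Measurable f) {μ : Measure (Ed d)} (h : π.map f = μ)
    (hμ : Integrable (fun x => ‖x‖ ^ 2) μ) : MemLp f 2 π :=
  (memLp_two_iff_integrable_sq_norm hf.aestronglyMeasurable).2
    ((integrable_map_measure (g := fun x => ‖x‖ ^ 2) (by fun_prop) hf.aemeasurable).1 (h ▸ hμ))

lemma memLp_sub_of_mem_couplings {μ ν : Measure (Ed d)} {π : Measure (Ed d × Ed d)}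
    (hπ : π ∈ couplings μ ν) (hμ : Integrable (fun x => ‖x‖ ^ 2) μ)
    (hν : Integrable (fun x => ‖x‖ ^ 2) ν) : MemLp (fun p : Ed d × Ed d => p.1 - p.2) 2 π :=
  (memLp_of_map_eq measurable_fst hπ.2.1 hμ).sub (memLp_of_map_eq measurable_snd hπ.2.2 hν)

lemma integrable_norm_sq_map_interp {μ ν : Measure (Ed d)} {π : Measure (Ed d × Ed d)}
    (hπ : π ∈ couplings μ ν) (hμ : Integrable (fun x => ‖x‖ ^ 2) μ)
    (hν : Integrable (fun x => ‖x‖ ^ 2) ν) (t : ℝ) :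
    Integrable (fun x => ‖x‖ ^ 2) (π.map (interp t)) := by
  have h : MemLp (interp t) 2 π :=
    ((memLp_of_map_eq measurable_fst hπ.2.1 hμ).const_smul (1 - t)).add
      ((memLp_of_map_eq measurable_snd hπ.2.2 hν).const_smul t)
  exact (integrable_map_measure (by fun_prop) (measurable_interp t).aemeasurable).2
    ((memLp_two_iff_integrable_sq_norm h.1).1 h)

lemma map_mem_couplings {Z : Type*} [MeasurableSpace Z] {μ ν : Measure (Ed d)}
    {π : Measure (Ed d × Ed d)} (hπ : π ∈ couplings μ ν)
    {M : Measure (Z × ((Ed d × Ed d) × (Ed d × Ed d)))} [IsProbabilityMeasure M]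
    (h₁ : M.map (fun ω => ω.2.1) = π) (h₂ : M.map (fun ω => ω.2.2) = π) :
    M.map (fun ω => (ω.2.1.1, ω.2.2.2)) ∈ couplings μ ν := by
  refine ⟨Measure.isProbabilityMeasure_map (by fun_prop), ?_, ?_⟩
  · rw [Measure.map_map measurable_fst (by fun_prop), ← hπ.2.1, ← h₁,
      Measure.map_map measurable_fst (by fun_prop)]
    rfl
  · rw [Measure.map_map measurable_snd (by fun_prop), ← hπ.2.2, ← h₂,
      Measure.map_map measurable_snd (by fun_prop)]
    rfl

lemma map_interp_mem_couplings (π : Measure (Ed d × Ed d)) [IsProbabilityMeasure π] (s t : ℝ) :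
    π.map (fun p => (interp s p, interp t p)) ∈ couplings (π.map (interp s)) (π.map (interp t)) :=
  ⟨Measure.isProbabilityMeasure_map (by fun_prop),
    Measure.fst_map_prodMk (measurable_interp t), Measure.snd_map_prodMk (measurable_interp s)⟩

lemma Vpi_map_interp (π : Measure (Ed d × Ed d)) (s t : ℝ) :
    Vpi (π.map (fun p => (interp s p, interp t p))) = (t - s) ^ 2 • Vpi π := by
  rw [Vpi_eq_secondMoment, secondMoment_map (by fun_prop) (by fun_prop),
    Vpi_eq_secondMoment, ← secondMoment_smul]
  congr 1
  funext p
  exact interp_sub_interp s t p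

lemma SRWsq_eq_of_forall_le (k : ℕ) {μ ν : Measure (Ed d)} {πstar : Measure (Ed d × Ed d)}
    (hπ : πstar ∈ couplings μ ν)
    (hopt : ∀ π ∈ couplings μ ν,
      topEigSum k (Vpi πstar) (Vpi_isHermitian πstar) ≤ topEigSum k (Vpi π) (Vpi_isHermitian π)) :
    SRWsq k μ ν = topEigSum k (Vpi πstar) (Vpi_isHermitian πstar) :=
  IsLeast.csInf_eq ⟨⟨πstar, hπ, rfl⟩, by rintro _ ⟨π, hπ, rfl⟩; exact hopt π hπ⟩

lemma SRWsq_comm (k : ℕ) (μ ν : Measure (Ed d)) : SRWsq k μ ν = SRWsq k ν μ := by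
  have hswap (μ ν : Measure (Ed d)) :
      (fun π => topEigSum k (Vpi π) (Vpi_isHermitian π)) '' couplings μ ν ⊆
        (fun π => topEigSum k (Vpi π) (Vpi_isHermitian π)) '' couplings ν μ := by
    rintro _ ⟨π, ⟨hπP, hπ₁, hπ₂⟩, rfl⟩
    have hV : Vpi (π.map Prod.swap) = Vpi π := by
      have hneg : (fun p : Ed d × Ed d => p.1 - p.2) ∘ Prod.swap =
          (-1 : ℝ) • fun p : Ed d × Ed d => p.1 - p.2 := by
        funext p
        simp
      rw [Vpi_eq_secondMoment, secondMoment_map measurable_swap.aemeasurable (by fun_prop), hneg,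
        secondMoment_smul, neg_one_sq, one_smul, Vpi_eq_secondMoment]
    refine ⟨π.map Prod.swap, ⟨Measure.isProbabilityMeasure_map measurable_swap.aemeasurable,
      ?_, ?_⟩, by simp only [hV]⟩
    · rw [Measure.map_map measurable_fst measurable_swap]; exact hπ₂
    · rw [Measure.map_map measurable_snd measurable_swap]; exact hπ₁
  rw [SRWsq, SRWsq, (hswap μ ν).antisymm (hswap ν μ)]

end Interpolation

section Geodesic

variable {d : ℕ}

lemma kyFanNorm_lift_le (k : ℕ) {s t : ℝ} (hs : 0 ≤ s) (ht : t ≤ 1)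
    {π γ : Measure (Ed d × Ed d)} {M : Measure ((Ed d × Ed d) × ((Ed d × Ed d) × (Ed d × Ed d)))}
    (hD : MemLp (fun p : Ed d × Ed d => p.1 - p.2) 2 π)
    (hγD : MemLp (fun p : Ed d × Ed d => p.1 - p.2) 2 γ) (hMγ : M.map Prod.fst = γ)
    (hM₁ : M.map (fun ω => ω.2.1) = π) (hM₂ : M.map (fun ω => ω.2.2) = π)
    (hs_ae : ∀ᵐ ω ∂M, ω.1.1 = interp s ω.2.1) (ht_ae : ∀ᵐ ω ∂M, ω.1.2 = interp t ω.2.2) :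
    kyFanNorm k M (fun ω => ω.2.1.1 - ω.2.2.2) ≤
      s * kyFanNorm k π (fun p => p.1 - p.2) + kyFanNorm k γ (fun p => p.1 - p.2) +
        (1 - t) * kyFanNorm k π (fun p => p.1 - p.2) := by
  set D : Ed d × Ed d → Ed d := fun p => p.1 - p.2
  have hDm : Measurable D := by fun_prop
  -- `x - y = (x - x_s) + (x_s - x_t) + (x_t - y)`, and the outer terms are rescaled copies of
  -- the displacement under `π`.
  set X : (Ed d × Ed d) × ((Ed d × Ed d) × (Ed d × Ed d)) → Ed d := fun ω => ω.2.1.1 - ω.1.1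
  set Y : (Ed d × Ed d) × ((Ed d × Ed d) × (Ed d × Ed d)) → Ed d := D ∘ Prod.fst
  set W : (Ed d × Ed d) × ((Ed d × Ed d) × (Ed d × Ed d)) → Ed d := fun ω => ω.1.2 - ω.2.2.2
  have hsum : (fun ω => ω.2.1.1 - ω.2.2.2) = X + Y + W := by
    funext ω
    simp only [Pi.add_apply, Function.comp_apply, D, X, Y, W]
    abel
  have hX : X =ᵐ[M] s • (D ∘ fun ω => ω.2.1) :=
    hs_ae.mono fun ω h => by simp only [X, h, fst_sub_interp]; rfl
  have hW : W =ᵐ[M] (1 - t) • (D ∘ fun ω => ω.2.2) :=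
    ht_ae.mono fun ω h => by simp only [W, h, interp_sub_snd]; rfl
  have hDP : MemLp (D ∘ fun ω => ω.2.1) 2 M :=
    (memLp_map_measure_iff hDm.aestronglyMeasurable (by fun_prop)).1 (hM₁ ▸ hD)
  have hDQ : MemLp (D ∘ fun ω => ω.2.2) 2 M :=
    (memLp_map_measure_iff hDm.aestronglyMeasurable (by fun_prop)).1 (hM₂ ▸ hD)
  have hXL : MemLp X 2 M := (hDP.const_smul s).ae_eq hX.symm
  have hYL : MemLp Y 2 M :=
    (memLp_map_measure_iff hDm.aestronglyMeasurable measurable_fst.aemeasurable).1 (hMγ ▸ hγD)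
  have hWL : MemLp W 2 M := (hDQ.const_smul (1 - t)).ae_eq hW.symm
  have hkX : kyFanNorm k M X = s * kyFanNorm k π D := by
    rw [kyFanNorm_congr_ae k hX, kyFanNorm_smul k hDP, abs_of_nonneg hs, ← hM₁,
      kyFanNorm_map k (by fun_prop) hDm]
  have hkY : kyFanNorm k M Y = kyFanNorm k γ D := by
    rw [← hMγ, kyFanNorm_map k measurable_fst.aemeasurable hDm]
  have hkW : kyFanNorm k M W = (1 - t) * kyFanNorm k π D := by
    rw [kyFanNorm_congr_ae k hW, kyFanNorm_smul k hDQ, abs_of_nonneg (by linarith), ← hM₂,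
      kyFanNorm_map k (by fun_prop) hDm]
  rw [hsum, ← hkX, ← hkY, ← hkW]
  exact (kyFanNorm_add_le k (hXL.add hYL) hWL).trans
    (add_le_add_left (kyFanNorm_add_le k hXL hYL) _)

lemma sub_mul_kyFanNorm_le (k : ℕ) {μ ν : Measure (Ed d)}
    (hμ : Integrable (fun x => ‖x‖ ^ 2) μ) (hν : Integrable (fun x => ‖x‖ ^ 2) ν)
    {πstar : Measure (Ed d × Ed d)} (hπ : πstar ∈ couplings μ ν)
    (hopt : ∀ π ∈ couplings μ ν,
      topEigSum k (Vpi πstar) (Vpi_isHermitian πstar) ≤ topEigSum k (Vpi π) (Vpi_isHermitian π))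
    {s t : ℝ} (hs : 0 ≤ s) (ht : t ≤ 1) {γ : Measure (Ed d × Ed d)}
    (hγ : γ ∈ couplings (πstar.map (interp s)) (πstar.map (interp t))) :
    (t - s) * kyFanNorm k πstar (fun p => p.1 - p.2) ≤ kyFanNorm k γ (fun p => p.1 - p.2) := by
  have := hπ.1
  have := hγ.1
  obtain ⟨M, hMP, hMγ, hM₁, hM₂, hs_ae, ht_ae⟩ :=
    exists_lift_of_map_eq (measurable_interp s) (measurable_interp t) γ hγ.2.1 hγ.2.2
  have hD := memLp_sub_of_mem_couplings hπ hμ hν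
  have hγD := memLp_sub_of_mem_couplings hγ (integrable_norm_sq_map_interp hπ hμ hν s)
    (integrable_norm_sq_map_interp hπ hμ hν t)
  have hk : kyFanNorm k πstar (fun p => p.1 - p.2) ≤
      kyFanNorm k M (fun ω => ω.2.1.1 - ω.2.2.2) :=
    calc _ ≤ kyFanNorm k (M.map fun ω => (ω.2.1.1, ω.2.2.2)) (fun p => p.1 - p.2) :=
          Real.sqrt_le_sqrt (hopt _ (map_mem_couplings hπ hM₁ hM₂))
      _ = _ := kyFanNorm_map k (by fun_prop) (by fun_prop)
  linarith [kyFanNorm_lift_le k hs ht hD hγD hMγ hM₁ hM₂ hs_ae ht_ae]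

lemma SRWsq_map_interp (k : ℕ) {μ ν : Measure (Ed d)}
    (hμ : Integrable (fun x => ‖x‖ ^ 2) μ) (hν : Integrable (fun x => ‖x‖ ^ 2) ν)
    {πstar : Measure (Ed d × Ed d)} (hπ : πstar ∈ couplings μ ν)
    (hopt : ∀ π ∈ couplings μ ν,
      topEigSum k (Vpi πstar) (Vpi_isHermitian πstar) ≤ topEigSum k (Vpi π) (Vpi_isHermitian π))
    {s t : ℝ} (hs : 0 ≤ s) (hst : s ≤ t) (ht : t ≤ 1) :
    SRWsq k (πstar.map (interp s)) (πstar.map (interp t)) = (t - s) ^ 2 * SRWsq k μ ν := by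
  have := hπ.1
  have hD := memLp_sub_of_mem_couplings hπ hμ hν
  have hV : (t - s) ^ 2 * topEigSum k (Vpi πstar) (Vpi_isHermitian πstar) =
      topEigSum k (Vpi (πstar.map fun p => (interp s p, interp t p))) (Vpi_isHermitian _) := by
    simp only [Vpi_map_interp]
    exact (topEigSum_smul k (posSemidef_secondMoment hD) (sq_nonneg _)).symm
  rw [SRWsq_eq_of_forall_le k hπ hopt, hV]
  refine SRWsq_eq_of_forall_le k (map_interp_mem_couplings πstar s t) fun γ hγ => ?_
  rw [← hV, ← sq_kyFanNorm_sub k hD, ← mul_pow, ← sq_kyFanNorm_sub k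
    (memLp_sub_of_mem_couplings hγ (integrable_norm_sq_map_interp hπ hμ hν s)
      (integrable_norm_sq_map_interp hπ hμ hν t))]
  exact pow_le_pow_left₀ (mul_nonneg (sub_nonneg.2 hst) (Real.sqrt_nonneg _))
    (sub_mul_kyFanNorm_le k hμ hν hπ hopt hs ht hγ) 2

end Geodesic

theorem SRW_geodesic_general {d : ℕ} (k : ℕ)
    (μ ν : Measure (Ed d))
    (hμ : Integrable (fun x => ‖x‖ ^ 2) μ) (hν : Integrable (fun x => ‖x‖ ^ 2) ν)
    (πstar : Measure (Ed d × Ed d)) (hπ : πstar ∈ couplings μ ν)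
    (hopt : ∀ π ∈ couplings μ ν,
      topEigSum k (Vpi πstar) (Vpi_isHermitian πstar) ≤
        topEigSum k (Vpi π) (Vpi_isHermitian π)) :
    ∀ s ∈ Set.Icc (0:ℝ) 1, ∀ t ∈ Set.Icc (0:ℝ) 1,
      Real.sqrt (SRWsq k
          (πstar.map (fun p : Ed d × Ed d => (1 - s) • p.1 + s • p.2))
          (πstar.map (fun p : Ed d × Ed d => (1 - t) • p.1 + t • p.2))) =
        |t - s| * Real.sqrt (SRWsq k μ ν) := by
  intro s hs t ht
  wlog hst : s ≤ t generalizing s t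
  · rw [SRWsq_comm, abs_sub_comm]
    exact this t ht s hs (le_of_not_ge hst)
  rw [show (fun p : Ed d × Ed d => (1 - s) • p.1 + s • p.2) = interp s from rfl,
    show (fun p : Ed d × Ed d => (1 - t) • p.1 + t • p.2) = interp t from rfl,
    SRWsq_map_interp k hμ hν hπ hopt hs.1 hst ht.2, Real.sqrt_mul (sq_nonneg _),
    Real.sqrt_sq_eq_abs]

/-- McCann interpolation along an optimal plan is a constant-speed geodesic for `S_k`:
with `μ_t = (f_t)_#π*`, `f_t(x,y) = (1−t)x + ty`, one has
`S_k(μ_s, μ_t) = |t − s| · S_k(μ, ν)` for all `s, t ∈ [0,1]`. -/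
theorem SRW_geodesic {d : ℕ} (k : ℕ) (hk : 1 ≤ k) (hkd : k ≤ d)
    (μ ν : Measure (Ed d)) [IsProbabilityMeasure μ] [IsProbabilityMeasure ν]
    (hμ : Integrable (fun x => ‖x‖ ^ 2) μ) (hν : Integrable (fun x => ‖x‖ ^ 2) ν)
    (πstar : Measure (Ed d × Ed d)) (hπ : πstar ∈ couplings μ ν)
    (hopt : ∀ π ∈ couplings μ ν,
      topEigSum k (Vpi πstar) (Vpi_isHermitian πstar) ≤
        topEigSum k (Vpi π) (Vpi_isHermitian π)) :
    ∀ s ∈ Set.Icc (0:ℝ) 1, ∀ t ∈ Set.Icc (0:ℝ) 1,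
      Real.sqrt (SRWsq k
          (πstar.map (fun p : Ed d × Ed d => (1 - s) • p.1 + s • p.2))
          (πstar.map (fun p : Ed d × Ed d => (1 - t) • p.1 + t • p.2))) =
        |t - s| * Real.sqrt (SRWsq k μ ν) :=
  SRW_geodesic_general k μ ν hμ hν πstar hπ hopt
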